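/- Let G be a finite group acting smoothly on a smooth manifold M, f : M → ℝ a smooth G-invariant function, x ∈ M, and suppose the isotropy group G_x is nontrivial and some h ∈ G_x acts on T_xM with dh_x ∈ SO(T_xM), dh_x ≠ id. Then df_x lies in the fixed subspace of the transpose action of dh_x on T_x^*M, a subspace of dimension at most dim M − 2. Consequently, for any G-invariant smooth functions f₁, ..., f_p (p = dim M), the exterior product df₁(x) ∧ ... ∧ df_p(x) = 0. -/

import Mathlib

/-! Differentiating `f ∘ h = f` at the fixed point `x` shows that `df_x` is fixed by the
transpose of `D = dh_x`. The isometry `D` preserves the orthogonal complement of its fixed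
space; were that complement a line, `D` would act on it by `-1`, i.e. `D` would be the
reflection in its fixed hyperplane, of determinant `-1`. So the fixed space of `D`, and hence
that of its transpose, has codimension at least two. The `p` differentials of invariant
functions therefore lie in a subspace of dimension at most `p - 2`, are linearly dependent,
and their wedge product vanishes. -/

open Module Manifold

theorem LinearMap.mem_ker_sub_id {R V : Type*} [Ring R] [AddCommGroup V] [Module R V]
    (f : V →ₗ[R] V) {v : V} : v ∈ ker (f - LinearMap.id) ↔ f v = v := by
  simp [sub_eq_zero]

namespace LinearIsometry

variable {E : Type*} [NormedAddCommGroup E] [InnerProductSpace ℝ E] (T : E →ₗᵢ[ℝ] E)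

theorem map_mem_orthogonal_ker_sub_id {v : E}
    (hv : v ∈ (LinearMap.ker (T.toLinearMap - LinearMap.id))ᗮ) :
    T v ∈ (LinearMap.ker (T.toLinearMap - LinearMap.id))ᗮ := by
  intro w hw
  have hTw : T w = w := T.toLinearMap.mem_ker_sub_id.mp hw
  rw [← hTw, T.inner_map_map]
  exact hv w hw

theorem apply_eq_neg_of_mem_orthogonal_ker_sub_id
    (hW : finrank ℝ (LinearMap.ker (T.toLinearMap - LinearMap.id))ᗮ = 1) {v : E}
    (hv : v ∈ (LinearMap.ker (T.toLinearMap - LinearMap.id))ᗮ) : T v = -v := by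
  set W := LinearMap.ker (T.toLinearMap - LinearMap.id)
  rcases eq_or_ne v 0 with rfl | hv0
  · simp
  obtain ⟨c, hc⟩ :=
    (finrank_eq_one_iff_of_nonzero' (⟨v, hv⟩ : Wᗮ) (by simpa using hv0)).mp hW
      ⟨T v, T.map_mem_orthogonal_ker_sub_id hv⟩
  replace hc : T v = c • v := (congrArg Subtype.val hc).symm
  have hc_abs : |c| = 1 := by
    have := T.norm_map v
    rw [hc, norm_smul, Real.norm_eq_abs] at this
    exact (mul_eq_right₀ (norm_ne_zero_iff.mpr hv0)).mp this
  have hc_ne_one : c ≠ 1 := by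
    rintro rfl
    exact hv0 (Submodule.disjoint_def.mp W.orthogonal_disjoint v
      (T.toLinearMap.mem_ker_sub_id.mpr (by simpa using hc)) hv)
  rw [hc, ((abs_eq zero_le_one).mp hc_abs).resolve_left hc_ne_one, neg_one_smul]

variable [FiniteDimensional ℝ E]

theorem toLinearMap_eq_reflection_ker_sub_id
    (hW : finrank ℝ (LinearMap.ker (T.toLinearMap - LinearMap.id))ᗮ = 1) :
    T.toLinearMap = (LinearMap.ker (T.toLinearMap - LinearMap.id)).reflection.toLinearMap := by
  set W := LinearMap.ker (T.toLinearMap - LinearMap.id)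
  refine LinearMap.ext_on_codisjoint W.isCompl_orthogonal.codisjoint (fun v hv => ?_)
    (fun v hv => ?_)
  · simp [W.reflection_mem_subspace_eq_self hv, T.toLinearMap.mem_ker_sub_id.mp hv]
  · simp [W.reflection_mem_subspace_orthogonalComplement_eq_neg hv,
      T.apply_eq_neg_of_mem_orthogonal_ker_sub_id hW hv]

theorem finrank_ker_sub_id_add_two_le (hdet : LinearMap.det T.toLinearMap = 1)
    (hT : T.toLinearMap ≠ LinearMap.id) :
    finrank ℝ (LinearMap.ker (T.toLinearMap - LinearMap.id)) + 2 ≤ finrank ℝ E := by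
  set W := LinearMap.ker (T.toLinearMap - LinearMap.id)
  have hW_ne_top : W ≠ ⊤ := fun htop =>
    hT (LinearMap.ext fun v => T.toLinearMap.mem_ker_sub_id.mp (Submodule.eq_top_iff'.mp htop v))
  have hW_ne_one : finrank ℝ Wᗮ ≠ 1 := fun hW => by
    have := W.det_reflection
    rw [← T.toLinearMap_eq_reflection_ker_sub_id hW, hdet, hW] at this
    norm_num at this
  have := Submodule.finrank_lt hW_ne_top
  have := W.finrank_add_finrank_orthogonal
  omega

end LinearIsometry

theorem LinearMap.finrank_ker_dualMap {K V : Type*} [Field K] [AddCommGroup V] [Module K V]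
    [FiniteDimensional K V] (f : V →ₗ[K] V) :
    finrank K (ker f.dualMap) = finrank K (ker f) := by
  have := f.dualMap.finrank_range_add_finrank_ker
  have := f.finrank_range_add_finrank_ker
  rw [finrank_range_dualMap_eq_finrank_range, Subspace.dual_finrank_eq] at *
  omega

theorem LinearMap.dualMap_sub_id {K V : Type*} [CommRing K] [AddCommGroup V] [Module K V]
    (f : V →ₗ[K] V) : f.dualMap - LinearMap.id = (f - LinearMap.id).dualMap := by
  ext; simp

theorem LinearIndependent.not_of_forall_mem_of_finrank_lt {K V ι : Type*} [DivisionRing K]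
    [AddCommGroup V] [Module K V] [Fintype ι] {v : ι → V} {S : Submodule K V}
    [FiniteDimensional K S] (hv : ∀ i, v i ∈ S) (hS : finrank K S < Fintype.card ι) :
    ¬LinearIndependent K v := fun hli =>
  hS.not_ge <| LinearIndependent.fintype_card_le_finrank <|
    LinearIndependent.of_comp S.subtype (v := fun i => (⟨v i, hv i⟩ : S)) hli

theorem ExteriorAlgebra.list_prod_ofFn_ι_eq_zero_of_not_linearIndependent {K V : Type*}
    [Field K] [AddCommGroup V] [Module K V] {n : ℕ} {v : Fin n → V}
    (hv : ¬LinearIndependent K v) :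
    (List.ofFn fun i => ι K (v i)).prod = 0 := by
  rw [← ιMulti_apply]
  exact (ιMulti K n).map_linearDependent v hv

theorem mfderiv_comp_eq_of_comp_eq {𝕜 : Type*} [NontriviallyNormedField 𝕜] {E : Type*}
    [NormedAddCommGroup E] [NormedSpace 𝕜 E] {H : Type*} [TopologicalSpace H]
    {I : ModelWithCorners 𝕜 E H} {M : Type*} [TopologicalSpace M] [ChartedSpace H M]
    {F : Type*} [NormedAddCommGroup F] [NormedSpace 𝕜 F] {f : M → F} {φ : M → M} {x : M}
    (hf : MDifferentiableAt I 𝓘(𝕜, F) f x) (hφ : MDifferentiableAt I I φ x) (hx : φ x = x)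
    (hfφ : f ∘ φ = f) :
    (mfderiv I 𝓘(𝕜, F) f x).comp (mfderiv I I φ x) = mfderiv I 𝓘(𝕜, F) f x := by
  have := mfderiv_comp x (hx ▸ hf) hφ
  rw [hfφ] at this
  conv_rhs => rw [this]
  rw [hx]

theorem invariant_differentials_wedge_vanishes_at_singular_point_general
    {E : Type*} [NormedAddCommGroup E] [InnerProductSpace ℝ E]
    [FiniteDimensional ℝ E]
    {H : Type*} [TopologicalSpace H] (I : ModelWithCorners ℝ E H)
    {M : Type*} [TopologicalSpace M] [ChartedSpace H M]
    (p : ℕ) (hp : Module.finrank ℝ E = p)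
    (G : Type*) [Group G] [MulAction G M]
    (hsmooth : ∀ g : G, ContMDiff I I (⊤ : ℕ∞) fun y : M => g • y)
    (x : M) (h : G) (hx : h • x = x)
    (D : E →L[ℝ] E)
    (hD : D = (hx ▸ mfderiv I I (fun y : M => h • y) x :
      TangentSpace I x →L[ℝ] TangentSpace I x))
    (hDorth : ∀ v : E, ‖D v‖ = ‖v‖)
    (hDdet : LinearMap.det (D : E →ₗ[ℝ] E) = 1)
    (hDne : D ≠ ContinuousLinearMap.id ℝ E) :
    (∀ f : M → ℝ, ContMDiff I 𝓘(ℝ, ℝ) (⊤ : ℕ∞) f → (∀ (g : G) (y : M), f (g • y) = f y) →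
      ((mfderiv I 𝓘(ℝ, ℝ) f x : E →L[ℝ] ℝ).toLinearMap).comp (D : E →ₗ[ℝ] E)
        = (mfderiv I 𝓘(ℝ, ℝ) f x : E →L[ℝ] ℝ).toLinearMap) ∧
    (Module.finrank ℝ
        (LinearMap.ker ((D : E →ₗ[ℝ] E).dualMap - LinearMap.id)) ≤ p - 2) ∧
    (∀ f : Fin p → M → ℝ, (∀ i, ContMDiff I 𝓘(ℝ, ℝ) (⊤ : ℕ∞) (f i)) →
      (∀ i (g : G) (y : M), f i (g • y) = f i y) →
      (List.ofFn (fun i =>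
          (ExteriorAlgebra.ι ℝ :
              Module.Dual ℝ E →ₗ[ℝ] ExteriorAlgebra ℝ (Module.Dual ℝ E))
            (mfderiv I 𝓘(ℝ, ℝ) (f i) x : E →L[ℝ] ℝ).toLinearMap)).prod = 0) := by
  have hDm : D = (mfderiv I I (fun y : M => h • y) x : E →L[ℝ] E) := by
    rw [hD]; exact eq_rec_constant _ hx
  have hinv : ∀ f : M → ℝ, ContMDiff I 𝓘(ℝ, ℝ) (⊤ : ℕ∞) f →
      (∀ (g : G) (y : M), f (g • y) = f y) →
      (mfderiv I 𝓘(ℝ, ℝ) f x).comp D = mfderiv I 𝓘(ℝ, ℝ) f x := fun f hf hfG =>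
    hDm ▸ mfderiv_comp_eq_of_comp_eq (hf.mdifferentiableAt (by simp))
      ((hsmooth h).mdifferentiableAt (by simp)) hx (funext (hfG h))
  set S := LinearMap.ker ((D : E →ₗ[ℝ] E).dualMap - LinearMap.id) with hS_def
  have hS : finrank ℝ S + 2 ≤ p := by
    rw [hS_def, LinearMap.dualMap_sub_id, LinearMap.finrank_ker_dualMap, ← hp]
    let T : E →ₗᵢ[ℝ] E := ⟨D, hDorth⟩
    exact T.finrank_ker_sub_id_add_two_le hDdet
      fun hid => hDne (ContinuousLinearMap.coe_injective hid)
  refine ⟨fun f hf hfG => congrArg ContinuousLinearMap.toLinearMap (hinv f hf hfG), by omega,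
    fun f hf hfG => ?_⟩
  refine ExteriorAlgebra.list_prod_ofFn_ι_eq_zero_of_not_linearIndependent <|
    LinearIndependent.not_of_forall_mem_of_finrank_lt (S := S) (fun i => ?_) (by simp; omega)
  exact (LinearMap.mem_ker_sub_id _).mpr <|
    congrArg ContinuousLinearMap.toLinearMap (hinv (f i) (hf i) (hfG i))

/-- At a singular point whose isotropy contains a nontrivial rotation, the
differential of any invariant function is constrained to a subspace of codimension
at least two, and hence the differentials of `p = dim M` invariant functions have
vanishing exterior product. -/
theorem invariant_differentials_wedge_vanishes_at_singular_point
    {E : Type*} [NormedAddCommGroup E] [InnerProductSpace ℝ E]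
    [FiniteDimensional ℝ E]
    {H : Type*} [TopologicalSpace H] (I : ModelWithCorners ℝ E H)
    {M : Type*} [TopologicalSpace M] [ChartedSpace H M]
    [IsManifold I (⊤ : ℕ∞) M]
    (p : ℕ) (hp : Module.finrank ℝ E = p)
    (G : Type*) [Group G] [Finite G] [MulAction G M]
    (hsmooth : ∀ g : G, ContMDiff I I (⊤ : ℕ∞) fun y : M => g • y)
    (x : M) (h : G) (hx : h • x = x) (hone : h ≠ 1)
    (D : E →L[ℝ] E)
    (hD : D = (hx ▸ mfderiv I I (fun y : M => h • y) x :
      TangentSpace I x →L[ℝ] TangentSpace I x))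
    (hDorth : ∀ v : E, ‖D v‖ = ‖v‖)
    (hDdet : LinearMap.det (D : E →ₗ[ℝ] E) = 1)
    (hDne : D ≠ ContinuousLinearMap.id ℝ E) :
    (∀ f : M → ℝ, ContMDiff I 𝓘(ℝ, ℝ) (⊤ : ℕ∞) f → (∀ (g : G) (y : M), f (g • y) = f y) →
      ((mfderiv I 𝓘(ℝ, ℝ) f x : E →L[ℝ] ℝ).toLinearMap).comp (D : E →ₗ[ℝ] E)
        = (mfderiv I 𝓘(ℝ, ℝ) f x : E →L[ℝ] ℝ).toLinearMap) ∧
    (Module.finrank ℝ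
        (LinearMap.ker ((D : E →ₗ[ℝ] E).dualMap - LinearMap.id)) ≤ p - 2) ∧
    (∀ f : Fin p → M → ℝ, (∀ i, ContMDiff I 𝓘(ℝ, ℝ) (⊤ : ℕ∞) (f i)) →
      (∀ i (g : G) (y : M), f i (g • y) = f i y) →
      (List.ofFn (fun i =>
          (ExteriorAlgebra.ι ℝ :
              Module.Dual ℝ E →ₗ[ℝ] ExteriorAlgebra ℝ (Module.Dual ℝ E))
            (mfderiv I 𝓘(ℝ, ℝ) (f i) x : E →L[ℝ] ℝ).toLinearMap)).prod = 0) :=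
  invariant_differentials_wedge_vanishes_at_singular_point_general I p hp G hsmooth x h hx D hD
    hDorth hDdet hDne
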